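/- Let G : ℍ → ℂ be holomorphic and satisfy G((aτ+b)/(cτ+d)) = (cτ+d)²·G(τ) for every (a,b;c,d) ∈ Γ₀(4). Suppose there are integers n₁, n₂, n₃ and coefficients A, B, C : ℤ → ℂ such that for all τ ∈ ℍ: G(τ) = Σ_{n≥n₁} A(n)·e^{2πinτ}, τ^{−2}·G(−1/τ) = Σ_{n≥n₂} B(n)·e^{2πinτ/4}, and (2τ+1)^{−2}·G(τ/(2τ+1)) = Σ_{n≥n₃} C(n)·e^{2πinτ}, each series converging absolutely and uniformly on {τ : Im τ ≥ y₀} for every y₀ > 0. Then A(0) + 4·B(0) + C(0) = 0. -/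

import Mathlib

open Complex UpperHalfPlane Matrix MatrixGroups CongruenceSubgroup Filter Topology Manifold
open scoped Real

set_option synthInstance.maxHeartbeats 1000000
set_option maxHeartbeats 1000000

noncomputable section

/-- The matrix `(1, 0; 2, 1) ∈ SL₂(ℤ)`, taking `∞` to the cusp `1/2` of `Γ₀(4)`. -/
def Vmat : SL(2, ℤ) := ⟨!![1, 0; 2, 1], by norm_num [Matrix.det_fin_two_of]⟩

/-!
`G(τ) dτ` is a holomorphic differential on `ℍ`, so it has a primitive `F` there and its integral
over any closed path in `ℍ` vanishes. Use the closed path `i → 1 + i → (3 + i)/5 → (2 + i)/5 → i`: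
the segment `[i, 1 + i]`, followed by the images of the segments `[i, 2 + i]` under `TS`,
`[i - 1, i]` under `V` and `[i - 2, i]` under `S`. As `d(γτ) = (cτ + d)⁻² dτ`, the integral of
`G(τ) dτ` over the `γ`-image of a horizontal segment is the integral of `G ∣[2] γ` over the
segment, and `G ∣[2] TS = G ∣[2] S` since `T ∈ Γ₀(4)`; so the `TS` and `S` pieces together give
`G ∣[2] S` integrated over the period `[-2 + i, 2 + i]`. Integrating the expansions term by term,
the integrals of `G`, `G ∣[2] S` and `G ∣[2] V` over a period are `A(0)`, `4 B(0)` and `C(0)`.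
-/

open MeasureTheory Metric

namespace Complex

variable {E : Type*} [NormedAddCommGroup E] {f : ℂ → E}

lemma rectangle_subset_upperHalfPlaneSet {z w : ℂ} (hz : 0 < z.im) (hw : 0 < w.im) :
    Rectangle z w ⊆ upperHalfPlaneSet := by
  rintro u ⟨-, hu⟩
  exact lt_of_lt_of_le (lt_min hz hw) hu.1

lemma intervalIntegrable_horizontal (hf : ContinuousOn f upperHalfPlaneSet) {y : ℝ} (hy : 0 < y)
    (a b : ℝ) : IntervalIntegrable (fun x : ℝ ↦ f (x + y * I)) volume a b :=
  (hf.comp_continuous (by fun_prop) fun x ↦ by simpa using hy).intervalIntegrable a b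

lemma intervalIntegrable_vertical (hf : ContinuousOn f upperHalfPlaneSet) (x : ℝ) {a b : ℝ}
    (ha : 0 < a) (hb : 0 < b) : IntervalIntegrable (fun y : ℝ ↦ f (x + y * I)) volume a b := by
  refine ContinuousOn.intervalIntegrable (hf.comp (by fun_prop) fun y hy ↦ ?_)
  simpa using lt_of_lt_of_le (lt_min ha hb) hy.1

lemma wedgeIntegral_sub_wedgeIntegral [NormedSpace ℂ E]
    (hf : DifferentiableOn ℂ f upperHalfPlaneSet) {c z w : ℂ} (hc : 0 < c.im) (hz : 0 < z.im)
    (hw : 0 < w.im) : wedgeIntegral c w f - wedgeIntegral c z f = wedgeIntegral z w f := by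
  -- the two sides differ by the boundary integral of the rectangle with these corners
  have hrect := hf.isConservativeOn (z.re + c.im * I) (w.re + z.im * I)
    (rectangle_subset_upperHalfPlaneSet (by simpa using hc) (by simpa using hz))
  rw [← add_eq_zero_iff_eq_neg, wedgeIntegral_add_wedgeIntegral_eq] at hrect
  simp only [add_re, ofReal_re, mul_re, I_re, mul_zero, ofReal_im, I_im, mul_one, sub_self,
    add_zero, add_im, mul_im, zero_add] at hrect
  have hre := intervalIntegral.integral_add_adjacent_intervals
    (intervalIntegrable_horizontal hf.continuousOn hc c.re z.re)
    (intervalIntegrable_horizontal hf.continuousOn hc z.re w.re)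
  have him := intervalIntegral.integral_add_adjacent_intervals
    (intervalIntegrable_vertical hf.continuousOn w.re hc hz)
    (intervalIntegrable_vertical hf.continuousOn w.re hz hw)
  simp only [wedgeIntegral, ← hre, ← him, smul_add]
  rw [← sub_eq_zero, ← hrect]
  abel

theorem _root_.DifferentiableOn.isExactOn_upperHalfPlaneSet [NormedSpace ℂ E] [CompleteSpace E]
    (hf : DifferentiableOn ℂ f upperHalfPlaneSet) : IsExactOn f upperHalfPlaneSet := by
  refine ⟨(wedgeIntegral I · f), fun z hz ↦ ?_⟩
  have hball : ball z z.im ⊆ upperHalfPlaneSet := fun w hw ↦ by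
    have := (abs_im_le_norm (w - z)).trans_lt (mem_ball_iff_norm.mp hw)
    simp only [sub_im, abs_lt] at this
    show 0 < w.im
    linarith
  have hderiv := (hf.mono hball).isConservativeOn.hasDerivAt_wedgeIntegral
    (hf.continuousOn.mono hball) (mem_ball_self hz)
  refine (hderiv.const_add (wedgeIntegral I z f)).congr_of_eventuallyEq ?_
  filter_upwards [isOpen_upperHalfPlaneSet.mem_nhds hz] with w hw
  rw [← wedgeIntegral_sub_wedgeIntegral hf (by rw [I_im]; exact one_pos) hz hw, add_sub_cancel]

lemma integral_exp_two_pi_I_int_mul_div (n : ℤ) {k : ℝ} (hk : k ≠ 0) (w : ℂ) (a : ℝ) :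
    ∫ t in a..a + k, exp (2 * π * I * n * (t + w) / k) = if n = 0 then (k : ℂ) else 0 := by
  split_ifs with hn
  · simp [hn]
  have hk' : (k : ℂ) ≠ 0 := ofReal_ne_zero.mpr hk
  set c : ℂ := 2 * π * I * n / k
  have hc : c ≠ 0 := div_ne_zero (by simp [Real.pi_ne_zero, hn]) hk'
  have hperiod : exp (c * ↑(a + k)) = exp (c * a) := by
    rw [ofReal_add, mul_add, exp_add, show c * k = n * (2 * π * I) by simp only [c]; field_simp,
      exp_int_mul_two_pi_mul_I, mul_one]
  calc ∫ t in a..a + k, exp (2 * π * I * n * (t + w) / k)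
      = exp (c * w) * ∫ t in a..a + k, exp (c * t) := by
        rw [← intervalIntegral.integral_const_mul]
        congr 1 with t
        rw [← exp_add]
        congr 1
        simp only [c]
        ring
    _ = 0 := by rw [integral_exp_mul_complex hc, hperiod, sub_self, zero_div, mul_zero]

end Complex

namespace UpperHalfPlane

open ModularForm

theorem exists_hasDerivAt_of_mdifferentiable {G : ℍ → ℂ} (hG : MDifferentiable 𝓘(ℂ) 𝓘(ℂ) G) :
    ∃ F : ℂ → ℂ, ∀ τ : ℍ, HasDerivAt F (G τ) τ := by
  obtain ⟨F, hF⟩ := (mdifferentiable_iff.mp hG).isExactOn_upperHalfPlaneSet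
  exact ⟨F, fun τ ↦ by simpa using hF τ τ.im_pos⟩

lemma continuous_vadd_const (τ : ℍ) : Continuous fun t : ℝ ↦ t +ᵥ τ :=
  continuous_induced_rng.2 (by simp only [Function.comp_def, coe_vadd]; fun_prop)

lemma hasDerivAt_smul_vadd (g : SL(2, ℤ)) (τ₀ : ℍ) (t : ℝ) :
    HasDerivAt (fun s : ℝ ↦ ((g • (s +ᵥ τ₀) : ℍ) : ℂ)) (denom g (t +ᵥ τ₀) ^ 2)⁻¹ t := by
  have hdet : (g : GL (Fin 2) ℝ).val.det = 1 := by
    rw [Matrix.SpecialLinearGroup.coe_GL_coe_matrix, Matrix.SpecialLinearGroup.det_coe]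
  have h := (hasStrictDerivAt_smul (hdet ▸ one_pos) (t +ᵥ τ₀)).hasDerivAt
  rw [coe_vadd, hdet, Complex.ofReal_one, one_div] at h
  convert (h.comp_add_const (t : ℂ) (τ₀ : ℂ)).comp_ofReal using 1
  · ext s
    rw [← coe_vadd, ofComplex_apply]
    rfl
  · rw [coe_vadd]

lemma continuous_slash_comp_vadd {G : ℍ → ℂ} (hG : MDifferentiable 𝓘(ℂ) 𝓘(ℂ) G) (k : ℤ)
    (g : SL(2, ℤ)) (τ₀ : ℍ) : Continuous fun t : ℝ ↦ (G ∣[k] g) (t +ᵥ τ₀) :=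
  (hG.slash k g).continuous.comp (continuous_vadd_const τ₀)

theorem integral_slash_eq_sub_of_hasDerivAt {G : ℍ → ℂ} (hG : MDifferentiable 𝓘(ℂ) 𝓘(ℂ) G)
    {F : ℂ → ℂ} (hF : ∀ τ : ℍ, HasDerivAt F (G τ) τ) (g : SL(2, ℤ)) (τ₀ : ℍ) (a b : ℝ) :
    ∫ t in a..b, (G ∣[(2 : ℤ)] g) (t +ᵥ τ₀) = F ↑(g • (b +ᵥ τ₀)) - F ↑(g • (a +ᵥ τ₀)) := by
  refine intervalIntegral.integral_eq_sub_of_hasDerivAt (f := fun t : ℝ ↦ F ↑(g • (t +ᵥ τ₀)))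
    (fun t _ ↦ ?_) ((continuous_slash_comp_vadd hG 2 g τ₀).intervalIntegrable a b)
  rw [SL_slash_apply, _root_.zpow_neg, zpow_ofNat]
  exact (hF _).comp t (hasDerivAt_smul_vadd g τ₀ t)

theorem integral_eq_mul_coeff_zero_of_tendstoUniformlyOn {c : ℤ → ℂ} {k : ℝ} (hk : k ≠ 0)
    {f : ℍ → ℂ} {s : Set ℍ} {τ₀ : ℍ} (hτ₀ : ∀ t : ℝ, t +ᵥ τ₀ ∈ s)
    (h : TendstoUniformlyOn
      (fun (S : Finset ℤ) (τ : ℍ) ↦ ∑ n ∈ S, c n * exp (2 * π * Complex.I * n * τ / k))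
      f atTop s) (a : ℝ) :
    ∫ t in a..a + k, f (t +ᵥ τ₀) = k * c 0 := by
  have hterm (n : ℤ) :
      Continuous fun t : ℝ ↦ c n * exp (2 * π * Complex.I * n * ↑(t +ᵥ τ₀) / k) := by
    simp only [coe_vadd]
    fun_prop
  have hlim := TendstoUniformlyOn.tendsto_intervalIntegral_of_continuousOn (μ := volume)
    (a := a) (b := a + k)
    (Eventually.of_forall fun S ↦ (continuous_finsetSum S fun n _ ↦ hterm n).continuousOn)
    ((h.comp (· +ᵥ τ₀)).mono fun t _ ↦ hτ₀ t)
  refine tendsto_nhds_unique hlim (tendsto_const_nhds.congr' ?_)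
  filter_upwards [eventually_ge_atTop {0}] with S hS
  rw [intervalIntegral.integral_finsetSum fun n _ ↦ (hterm n).intervalIntegrable _ _]
  simp only [intervalIntegral.integral_const_mul, coe_vadd,
    Complex.integral_exp_two_pi_I_int_mul_div _ hk, mul_ite, mul_zero, Finset.sum_ite_eq',
    Finset.singleton_subset_iff.mp hS, if_true]
  ring

lemma slash_two_eq_self {G : ℍ → ℂ} {γ : SL(2, ℤ)}
    (h : ∀ τ : ℍ, G (γ • τ) = ((γ 1 0 : ℂ) * (τ : ℂ) + (γ 1 1 : ℂ)) ^ 2 * G τ) :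
    G ∣[(2 : ℤ)] γ = G := by
  ext τ
  rw [SL_slash_apply, h, ← ModularGroup.denom_apply, _root_.zpow_neg, zpow_ofNat, mul_comm,
    inv_mul_cancel_left₀ (pow_ne_zero 2 (denom_ne_zero _ _))]

lemma slash_two_S_apply (G : ℍ → ℂ) (τ : ℍ) :
    (G ∣[(2 : ℤ)] ModularGroup.S) τ = ((τ : ℂ) ^ 2)⁻¹ * G (ModularGroup.S • τ) := by
  rw [SL_slash_apply, ModularGroup.denom_S, _root_.zpow_neg, zpow_ofNat, mul_comm]

lemma slash_two_Vmat_apply (G : ℍ → ℂ) (τ : ℍ) :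
    (G ∣[(2 : ℤ)] Vmat) τ = ((2 * (τ : ℂ) + 1) ^ 2)⁻¹ * G (Vmat • τ) := by
  rw [SL_slash_apply, ModularGroup.denom_apply, _root_.zpow_neg, zpow_ofNat, mul_comm]
  simp [Vmat]

end UpperHalfPlane

namespace ModularGroup

open UpperHalfPlane

lemma S_smul_I : S • UpperHalfPlane.I = UpperHalfPlane.I := by
  apply UpperHalfPlane.ext
  simp only [coe_specialLinearGroup_apply, coe_I]
  simp [S]

lemma T_mul_S_smul_I : (T * S) • UpperHalfPlane.I = (1 : ℝ) +ᵥ UpperHalfPlane.I := by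
  rw [mul_smul, S_smul_I, modular_T_smul]

lemma T_mul_S_smul_two_vadd_I :
    (T * S) • ((2 : ℝ) +ᵥ UpperHalfPlane.I) = Vmat • ((-1 : ℝ) +ᵥ UpperHalfPlane.I) := by
  have h₁ : 2 + Complex.I ≠ 0 := by simp [Complex.ext_iff]
  have h₂ : 2 * (-1 + Complex.I) + 1 ≠ 0 := by simp [Complex.ext_iff]
  -- both sides are `(3 + i)/5`
  have key : 1 + -1 / (2 + Complex.I) = (-1 + Complex.I) / (2 * (-1 + Complex.I) + 1) := by
    field_simp
    linear_combination Complex.I_sq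
  rw [mul_smul, modular_T_smul]
  apply UpperHalfPlane.ext
  simp only [coe_specialLinearGroup_apply, coe_vadd, coe_I]
  simpa [S, Vmat] using key

lemma S_smul_neg_two_vadd_I : S • ((-2 : ℝ) +ᵥ UpperHalfPlane.I) = Vmat • UpperHalfPlane.I := by
  have h₁ : -2 + Complex.I ≠ 0 := by simp [Complex.ext_iff]
  have h₂ : 2 * Complex.I + 1 ≠ 0 := by simp [Complex.ext_iff]
  -- both sides are `(2 + i)/5`
  have key : -1 / (-2 + Complex.I) = Complex.I / (2 * Complex.I + 1) := by
    field_simp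
    linear_combination -Complex.I_sq
  apply UpperHalfPlane.ext
  simp only [coe_specialLinearGroup_apply, coe_vadd, coe_I]
  simpa [S, Vmat] using key

end ModularGroup

open ModularForm in
theorem UpperHalfPlane.integral_add_integral_slash_S_add_integral_slash_Vmat_eq_zero
    {G : ℍ → ℂ} (hG : MDifferentiable 𝓘(ℂ) 𝓘(ℂ) G) (hT : G ∣[(2 : ℤ)] ModularGroup.T = G) :
    (∫ t in (0 : ℝ)..1, G (t +ᵥ I)) + (∫ t in (-2 : ℝ)..2, (G ∣[(2 : ℤ)] ModularGroup.S) (t +ᵥ I))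
      + ∫ t in (-1 : ℝ)..0, (G ∣[(2 : ℤ)] Vmat) (t +ᵥ I) = 0 := by
  obtain ⟨F, hF⟩ := exists_hasDerivAt_of_mdifferentiable hG
  have hsplit := intervalIntegral.integral_add_adjacent_intervals
    ((continuous_slash_comp_vadd hG 2 ModularGroup.S I).intervalIntegrable (μ := volume) (-2) 0)
    ((continuous_slash_comp_vadd hG 2 ModularGroup.S I).intervalIntegrable 0 2)
  have hA := integral_slash_eq_sub_of_hasDerivAt hG hF 1 I 0 1
  have hS := integral_slash_eq_sub_of_hasDerivAt hG hF ModularGroup.S I (-2) 0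
  have hTS := integral_slash_eq_sub_of_hasDerivAt hG hF (ModularGroup.T * ModularGroup.S) I 0 2
  have hV := integral_slash_eq_sub_of_hasDerivAt hG hF Vmat I (-1) 0
  rw [SlashAction.slash_one] at hA
  rw [SlashAction.slash_mul, hT] at hTS
  simp only [one_smul, zero_vadd, ModularGroup.S_smul_I, ModularGroup.T_mul_S_smul_I,
    ModularGroup.T_mul_S_smul_two_vadd_I, ModularGroup.S_smul_neg_two_vadd_I] at hA hS hTS hV
  linear_combination hA + hS + hTS + hV - hsplit

open ModularForm in
theorem statement6_general
    (G : ℍ → ℂ) (hol : MDifferentiable 𝓘(ℂ) 𝓘(ℂ) G)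
    (transf : ∀ γ ∈ Gamma0 4, ∀ τ : ℍ,
      G (γ • τ) = ((γ 1 0 : ℂ) * (τ : ℂ) + (γ 1 1 : ℂ)) ^ 2 * G τ)
    (A B C : ℤ → ℂ)
    (hAexp : ∀ y₀ : ℝ, 0 < y₀ →
      TendstoUniformlyOn
        (fun (s : Finset ℤ) (τ : ℍ) => ∑ n ∈ s, A n * Complex.exp (2 * Real.pi * Complex.I * n * τ))
        (fun τ => G τ) Filter.atTop {τ : ℍ | y₀ ≤ τ.im})
    (hBexp : ∀ y₀ : ℝ, 0 < y₀ →
      TendstoUniformlyOn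
        (fun (s : Finset ℤ) (τ : ℍ) =>
          ∑ n ∈ s, B n * Complex.exp (2 * Real.pi * Complex.I * n * τ / 4))
        (fun τ => (((τ : ℂ)) ^ 2)⁻¹ * G (ModularGroup.S • τ)) Filter.atTop {τ : ℍ | y₀ ≤ τ.im})
    (hCexp : ∀ y₀ : ℝ, 0 < y₀ →
      TendstoUniformlyOn
        (fun (s : Finset ℤ) (τ : ℍ) =>
          ∑ n ∈ s, C n * Complex.exp (2 * Real.pi * Complex.I * n * τ))
        (fun τ => ((2 * (τ : ℂ) + 1) ^ 2)⁻¹ * G (Vmat • τ)) Filter.atTop {τ : ℍ | y₀ ≤ τ.im}) :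
    A 0 + 4 * B 0 + C 0 = 0 := by
  have hT : G ∣[(2 : ℤ)] ModularGroup.T = G :=
    slash_two_eq_self (transf _ (by rw [Gamma0_mem]; simp [ModularGroup.T]))
  have hline (t : ℝ) : t +ᵥ UpperHalfPlane.I ∈ {τ : ℍ | 1 ≤ τ.im} := by simp
  have hA : ∫ t in (0 : ℝ)..1, G (t +ᵥ UpperHalfPlane.I) = A 0 := by
    simpa using integral_eq_mul_coeff_zero_of_tendstoUniformlyOn one_ne_zero hline
      (by simpa only [ofReal_one, div_one] using hAexp 1 one_pos) 0
  have hB :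
      ∫ t in (-2 : ℝ)..2, (G ∣[(2 : ℤ)] ModularGroup.S) (t +ᵥ UpperHalfPlane.I) = 4 * B 0 := by
    simpa [show (-2 : ℝ) + 4 = 2 by norm_num] using
      integral_eq_mul_coeff_zero_of_tendstoUniformlyOn four_ne_zero hline
      (by simpa only [ofReal_ofNat, ← slash_two_S_apply] using hBexp 1 one_pos) (-2)
  have hC : ∫ t in (-1 : ℝ)..0, (G ∣[(2 : ℤ)] Vmat) (t +ᵥ UpperHalfPlane.I) = C 0 := by
    simpa using integral_eq_mul_coeff_zero_of_tendstoUniformlyOn one_ne_zero hline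
      (by simpa only [ofReal_one, div_one, ← slash_two_Vmat_apply] using hCexp 1 one_pos) (-1)
  linear_combination
    integral_add_integral_slash_S_add_integral_slash_Vmat_eq_zero hol hT - hA - hB - hC

/-- If `G` is holomorphic on `ℍ`, transforms with weight `2` under `Γ₀(4)`,
and has expansions `G(τ) = Σ A(n)e^{2πinτ}`, `τ^{−2}G(−1/τ) = Σ B(n)e^{2πinτ/4}` and
`(2τ+1)^{−2}G(τ/(2τ+1)) = Σ C(n)e^{2πinτ}` (each converging absolutely, and uniformly on
`Im τ ≥ y₀` for every `y₀ > 0`), then `A(0) + 4·B(0) + C(0) = 0`. -/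
theorem statement6
    (G : ℍ → ℂ) (hol : MDifferentiable 𝓘(ℂ) 𝓘(ℂ) G)
    (transf : ∀ γ ∈ Gamma0 4, ∀ τ : ℍ,
      G (γ • τ) = ((γ 1 0 : ℂ) * (τ : ℂ) + (γ 1 1 : ℂ)) ^ 2 * G τ)
    (n₁ n₂ n₃ : ℤ) (A B C : ℤ → ℂ)
    (hA : ∀ n : ℤ, n < n₁ → A n = 0)
    (hB : ∀ n : ℤ, n < n₂ → B n = 0)
    (hC : ∀ n : ℤ, n < n₃ → C n = 0)
    (hAabs : ∀ τ : ℍ,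
      Summable fun n : ℤ => ‖A n * Complex.exp (2 * Real.pi * Complex.I * n * τ)‖)
    (hBabs : ∀ τ : ℍ,
      Summable fun n : ℤ => ‖B n * Complex.exp (2 * Real.pi * Complex.I * n * τ / 4)‖)
    (hCabs : ∀ τ : ℍ,
      Summable fun n : ℤ => ‖C n * Complex.exp (2 * Real.pi * Complex.I * n * τ)‖)
    (hAexp : ∀ y₀ : ℝ, 0 < y₀ →
      TendstoUniformlyOn
        (fun (s : Finset ℤ) (τ : ℍ) => ∑ n ∈ s, A n * Complex.exp (2 * Real.pi * Complex.I * n * τ))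
        (fun τ => G τ) Filter.atTop {τ : ℍ | y₀ ≤ τ.im})
    (hBexp : ∀ y₀ : ℝ, 0 < y₀ →
      TendstoUniformlyOn
        (fun (s : Finset ℤ) (τ : ℍ) =>
          ∑ n ∈ s, B n * Complex.exp (2 * Real.pi * Complex.I * n * τ / 4))
        (fun τ => (((τ : ℂ)) ^ 2)⁻¹ * G (ModularGroup.S • τ)) Filter.atTop {τ : ℍ | y₀ ≤ τ.im})
    (hCexp : ∀ y₀ : ℝ, 0 < y₀ →
      TendstoUniformlyOn
        (fun (s : Finset ℤ) (τ : ℍ) =>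
          ∑ n ∈ s, C n * Complex.exp (2 * Real.pi * Complex.I * n * τ))
        (fun τ => ((2 * (τ : ℂ) + 1) ^ 2)⁻¹ * G (Vmat • τ)) Filter.atTop {τ : ℍ | y₀ ≤ τ.im}) :
    A 0 + 4 * B 0 + C 0 = 0 :=
  statement6_general G hol transf A B C hAexp hBexp hCexp
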